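/- Let K ⊂ ℝⁿ be a strictly convex, smooth, compact set with 0 in its interior, F_K(x) = −ln(1 − ‖x‖_K) − ‖x‖_K, and let x ∈ K with ‖x‖_K < 1, v = ∇F_K(x), and u ∈ ℝⁿ \ {0}. If Θ = (‖u‖_{K°} − ‖v‖_{K°})/(1 + ‖v‖_{K°}) ≥ −1/2, then D_{F_K*}(u, v) ≤ (1 − ‖x‖_K)²‖u − v‖²_{K°} + (1 − ‖x‖_K)·D_{½‖·‖²_{K°}}(u, v). -/

import Mathlib

open scoped InnerProductSpace
open scoped Pointwise
open MeasureTheory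

noncomputable section

abbrev Euc (n : ℕ) := EuclideanSpace ℝ (Fin n)

/-- The polar set `K° = {d | ⟪d, x⟫ ≤ 1 for all x ∈ K}`. -/
def polarSet {n : ℕ} (K : Set (Euc n)) : Set (Euc n) := {d | ∀ x ∈ K, ⟪d, x⟫_ℝ ≤ 1}

/-- The normal cone of `K` at `y`. -/
def normalCone {n : ℕ} (K : Set (Euc n)) (y : Euc n) : Set (Euc n) :=
  {d | ∀ x ∈ K, 0 ≤ ⟪d, y - x⟫_ℝ}

/-- A set is smooth if at each boundary point there is exactly one normal direction in `∂K°`. -/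
def SmoothSet {n : ℕ} (K : Set (Euc n)) : Prop :=
  ∀ x ∈ frontier K, ∃! d, d ∈ normalCone K x ∩ frontier (polarSet K)

/-- A set is strictly convex if the midpoint of two distinct boundary points is interior. -/
def StrictlyConvexSet {n : ℕ} (K : Set (Euc n)) : Prop :=
  ∀ x₁ ∈ frontier K, ∀ x₂ ∈ frontier K, x₁ ≠ x₂ → midpoint ℝ x₁ x₂ ∈ interior K

/-- `(α, q)`-uniform convexity of a set w.r.t. its gauge. -/
def UniformlyConvexSet {n : ℕ} (K : Set (Euc n)) (α q : ℝ) : Prop :=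
  ∀ x ∈ K, ∀ y ∈ K, ∀ z ∈ K, ∀ γ ∈ Set.Icc (0:ℝ) 1,
    γ • x + (1 - γ) • y + (α / q * (γ * (1 - γ)) * gauge K (x - y) ^ q) • z ∈ K

/-- The barrier function `F_K(x) = -ln(1 - ‖x‖_K) - ‖x‖_K`. -/
def FK {n : ℕ} (K : Set (Euc n)) (x : Euc n) : ℝ := -Real.log (1 - gauge K x) - gauge K x

/-- Fenchel conjugate of the barrier `F_K` (defined on `D_K = {‖x‖_K < 1}`). -/
def FstarK {n : ℕ} (K : Set (Euc n)) (d : Euc n) : ℝ :=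
  sSup ((fun x => ⟪x, d⟫_ℝ - FK K x) '' {x | gauge K x < 1})

/-- Bregman divergence `D_F(u, v) = F(u) - F(v) - ⟪∇F(v), u - v⟫`. -/
def breg {n : ℕ} (F : Euc n → ℝ) (u v : Euc n) : ℝ :=
  F u - F v - ⟪gradient F v, u - v⟫_ℝ

def l1Ball {n : ℕ} (r : ℝ) : Set (Euc n) := {x | ∑ i, |x i| ≤ r}
def linfBall {n : ℕ} (R : ℝ) : Set (Euc n) := {x | ∀ i, |x i| ≤ R}
def l2Ball {n : ℕ} (r : ℝ) : Set (Euc n) := Metric.closedBall 0 r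
def lqBall {n : ℕ} (q r : ℝ) : Set (Euc n) := {x | ∑ i, |x i| ^ q ≤ r ^ q}

/-!
Write `g(σ) = σ - ln(1 + σ)`, `t = ‖x‖_K`, `s = ‖v‖_{K°}` and `r = ‖u‖_{K°}`. The conjugate barrier
is radial in the polar gauge, `F_K^*(d) = g(‖d‖_{K°})`. Smoothness of `K` gives
`∇F_K(x) = (t / (1 - t)) ∇‖·‖_K(x)` with `‖∇‖·‖_K(x)‖_{K°} = 1`, so `1 - t = 1 / (1 + s)`.
Strict convexity of `K` makes `‖·‖_{K°}` differentiable at `v ≠ 0`, so the gradients of `F_K^*`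
and of `½‖·‖²_{K°}` at `v` are `g'(s) W` and `s W` for one vector `W`; since
`g'(s) = s / (1 + s) = (1 - t) s` the linear terms cancel and
`D_{F_K^*}(u, v) - (1 - t) D_{½‖·‖²_{K°}}(u, v) = g(r) - g(s) - (r² - s²) / (2(1 + s))`.
This is `≤ 0` because `r ↦ g(r) - r² / (2(1 + s))` has derivative `r (s - r) / ((1 + r)(1 + s))`
and so peaks at `r = s`.
-/

open Set Filter Topology Metric

def barrier (a : ℝ) : ℝ := -Real.log (1 - a) - a

def conjBarrier (σ : ℝ) : ℝ := σ - Real.log (1 + σ)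

lemma hasDerivAt_barrier {a : ℝ} (ha : a < 1) : HasDerivAt barrier (a / (1 - a)) a := by
  have h1a : 1 - a ≠ 0 := by linarith
  refine ((((hasDerivAt_id' a).const_sub 1).log h1a).fun_neg.fun_sub
    (hasDerivAt_id' a)).congr_deriv ?_
  field_simp
  ring

lemma hasDerivAt_conjBarrier {σ : ℝ} (hσ : -1 < σ) :
    HasDerivAt conjBarrier (σ / (1 + σ)) σ := by
  have h1σ : 1 + σ ≠ 0 := by linarith
  refine ((hasDerivAt_id' σ).fun_sub
    (((hasDerivAt_id' σ).const_add 1).log h1σ)).congr_deriv ?_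
  field_simp
  ring

lemma barrier_le_barrier {a b : ℝ} (ha : 0 ≤ a) (hab : a ≤ b) (hb : b < 1) :
    barrier a ≤ barrier b := by
  have hlog := Real.log_le_sub_one_of_pos (show 0 < (1 - b) / (1 - a) by
    apply div_pos <;> linarith)
  rw [Real.log_div (by linarith) (by linarith), div_sub_one (by linarith)] at hlog
  have h : (1 - b - (1 - a)) / (1 - a) ≤ a - b := by
    rw [div_le_iff₀ (by linarith)]
    nlinarith
  unfold barrier
  linarith

/-- Fenchel–Young: `conjBarrier` is the convex conjugate of `barrier`. -/
lemma mul_sub_barrier_le_conjBarrier {a σ : ℝ} (ha : a < 1) (hσ : -1 < σ) :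
    a * σ - barrier a ≤ conjBarrier σ := by
  have hlog := Real.log_le_sub_one_of_pos (mul_pos (sub_pos.2 ha) (neg_lt_iff_pos_add'.1 hσ))
  rw [Real.log_mul (by linarith) (by linarith)] at hlog
  unfold barrier conjBarrier
  nlinarith

lemma mul_sub_barrier_eq_conjBarrier {σ : ℝ} (hσ : -1 < σ) :
    σ / (1 + σ) * σ - barrier (σ / (1 + σ)) = conjBarrier σ := by
  have h1σ : 1 + σ ≠ 0 := by linarith
  have h : 1 - σ / (1 + σ) = (1 + σ)⁻¹ := by field_simp; ring
  rw [barrier, conjBarrier, h, Real.log_inv]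
  field_simp
  ring

lemma conjBarrier_sub_conjBarrier_le {r s : ℝ} (hr : 0 ≤ r) (hs : 0 ≤ s) :
    conjBarrier r - conjBarrier s ≤ (r ^ 2 - s ^ 2) / (2 * (1 + s)) := by
  set h : ℝ → ℝ := fun ρ => conjBarrier ρ - ρ ^ 2 / (2 * (1 + s))
  have hderiv : ∀ ρ, 0 ≤ ρ → HasDerivAt h (ρ * (s - ρ) / ((1 + ρ) * (1 + s))) ρ := by
    intro ρ hρ
    have h1ρ : 1 + ρ ≠ 0 := by linarith
    have h1s : 1 + s ≠ 0 := by linarith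
    refine ((hasDerivAt_conjBarrier (by linarith)).fun_sub
      (((hasDerivAt_id' ρ).fun_pow 2).div_const (2 * (1 + s)))).congr_deriv ?_
    field_simp
    ring
  have hcont : ContinuousOn h (Ici 0) := fun ρ hρ => (hderiv ρ hρ).continuousAt.continuousWithinAt
  have hmax : h r ≤ h s := by
    rcases le_total r s with hrs | hsr
    · refine monotoneOn_of_hasDerivWithinAt_nonneg (convex_Icc 0 s)
        (hcont.mono Icc_subset_Ici_self)
        (fun ρ hρ => (hderiv ρ (interior_subset hρ).1).hasDerivWithinAt) (fun ρ hρ => ?_)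
        ⟨hr, hrs⟩ ⟨hs, le_rfl⟩ hrs
      rw [interior_Icc] at hρ
      exact div_nonneg (mul_nonneg hρ.1.le (by linarith [hρ.2])) (by nlinarith [hρ.1])
    · refine antitoneOn_of_hasDerivWithinAt_nonpos (convex_Ici s)
        (hcont.mono (Ici_subset_Ici.2 hs))
        (fun ρ hρ => (hderiv ρ (hs.trans (interior_subset hρ))).hasDerivWithinAt)
        (fun ρ hρ => ?_) (mem_Ici.2 le_rfl) hsr hsr
      rw [interior_Ici] at hρ
      exact div_nonpos_of_nonpos_of_nonneg
        (mul_nonpos_of_nonneg_of_nonpos (hs.trans hρ.le) (by linarith [mem_Ioi.1 hρ]))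
        (by nlinarith [mem_Ioi.1 hρ])
  have h1s : (0 : ℝ) < 2 * (1 + s) := by linarith
  simp only [h] at hmax
  rw [sub_div]
  linarith

section Gauge

variable {E : Type*} [NormedAddCommGroup E] [InnerProductSpace ℝ E]

lemma HasDerivAt.comp_hasGradientAt [CompleteSpace E] {f : ℝ → ℝ} {f' : ℝ} {M : E → ℝ}
    {w x : E} (hf : HasDerivAt f f' (M x)) (hM : HasGradientAt M w x) :
    HasGradientAt (fun y => f (M y)) (f' • w) x := by
  rw [hasGradientAt_iff_hasFDerivAt] at hM ⊢
  refine (hf.comp_hasFDerivAt x hM).congr_fderiv ?_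
  ext y
  simp

lemma HasDerivAt.comp_hasGradientAt_zero [CompleteSpace E] {f : ℝ → ℝ} {N : E → ℝ}
    (hf : HasDerivAt f 0 0) (hN0 : N 0 = 0) (hN : N =O[𝓝 0] fun y => y) :
    HasGradientAt (fun y => f (N y)) 0 0 := by
  rw [hasDerivAt_iff_isLittleO] at hf
  simp only [sub_zero, smul_zero] at hf
  have hNt : Tendsto N (𝓝 0) (𝓝 0) := hN.trans_tendsto tendsto_id
  rw [hasGradientAt_iff_isLittleO]
  simp only [hN0, inner_zero_left, sub_zero]
  exact (hf.comp_tendsto hNt).trans_isBigO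
    (show ((fun σ : ℝ => σ) ∘ N) =O[𝓝 0] fun y => y from hN)

lemma gauge_isBigO_id {s : Set E} (hs : s ∈ 𝓝 0) : gauge s =O[𝓝 0] fun y => y := by
  obtain ⟨r, hr, hball⟩ := Metric.mem_nhds_iff.1 hs
  refine Asymptotics.IsBigO.of_bound r⁻¹ (Eventually.of_forall fun y => ?_)
  rw [Real.norm_eq_abs, abs_of_nonneg (gauge_nonneg y), ← div_eq_inv_mul, le_div_iff₀ hr,
    mul_comm]
  exact mul_gauge_le_norm hball

lemma gauge_pos_of_ne_zero {s : Set E} (hs : Bornology.IsBounded s) (h0 : s ∈ 𝓝 0) {z : E}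
    (hz : z ≠ 0) : 0 < gauge s z :=
  (gauge_pos (absorbent_nhds_zero h0) ((NormedSpace.isVonNBounded_iff ℝ).2 hs)).2 hz

lemma gauge_inv_gauge_smul {s : Set E} {z : E} (hz : gauge s z ≠ 0) :
    gauge s ((gauge s z)⁻¹ • z) = 1 := by
  rw [gauge_smul_of_nonneg (inv_nonneg.2 (gauge_nonneg z)), smul_eq_mul, inv_mul_cancel₀ hz]

lemma inv_gauge_smul_mem {s : Set E} (hs : IsClosed s) (hc : Convex ℝ s) (h0 : s ∈ 𝓝 0)
    (z : E) : (gauge s z)⁻¹ • z ∈ s := by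
  rcases eq_or_ne (gauge s z) 0 with hz | hz
  · rw [hz, inv_zero, zero_smul]
    exact mem_of_mem_nhds h0
  · simpa only [hs.closure_eq] using
      (gauge_le_one_iff_mem_closure hc h0).1 (gauge_inv_gauge_smul hz).le

def IsSupportFunction (C : Set E) (M : E → ℝ) : Prop :=
  ∀ z, (∀ y ∈ C, ⟪y, z⟫_ℝ ≤ M z) ∧ ∃ y ∈ C, ⟪y, z⟫_ℝ = M z

namespace IsSupportFunction

variable {C : Set E} {M : E → ℝ}

lemma inner_le (hM : IsSupportFunction C M) {y : E} (hy : y ∈ C) (z : E) : ⟪y, z⟫_ℝ ≤ M z :=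
  (hM z).1 y hy

lemma exists_inner_eq (hM : IsSupportFunction C M) (z : E) : ∃ y ∈ C, ⟪y, z⟫_ℝ = M z :=
  (hM z).2

lemma eventually_norm_sub_le (hM : IsSupportFunction C M) (hC : IsCompact C) {w x : E}
    (hw : w ∈ C) (hwx : ⟪w, x⟫_ℝ = M x) (huniq : ∀ y ∈ C, ⟪y, x⟫_ℝ = M x → y = w)
    {c : ℝ} (hc : 0 < c) :
    ∀ᶠ x' in 𝓝 x, ∀ y ∈ C, ⟪y, x'⟫_ℝ = M x' → ‖y - w‖ ≤ c := by
  set A := {y ∈ C | c ≤ ‖y - w‖}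
  have hA : IsCompact A :=
    hC.inter_right (isClosed_le continuous_const (continuous_id.sub continuous_const).norm)
  -- Points of `C` far from `w` fall short of the maximum at `x` by a uniform gap `η`.
  obtain ⟨η, hη, hgap⟩ := hA.exists_forall_le' (f := fun y => M x - ⟪y, x⟫_ℝ) (a := 0)
    (by fun_prop) fun y hy => sub_pos.2 <| (hM.inner_le hy.1 x).lt_of_ne fun h => by
      have hcw : c ≤ ‖y - w‖ := hy.2
      rw [huniq y hy.1 h, sub_self, norm_zero] at hcw
      exact hc.not_ge hcw
  obtain ⟨B, hB⟩ := hC.isBounded.exists_norm_le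
  have hB0 : 0 ≤ B := (norm_nonneg w).trans (hB w hw)
  filter_upwards [ball_mem_nhds x (show 0 < η / (2 * B + 1) by positivity)] with x' hx' y hy hyx'
  by_contra! hfar
  have hgapy : η ≤ M x - ⟪y, x⟫_ℝ := hgap y ⟨hy, hfar.le⟩
  have hwy : ⟪w - y, x'⟫_ℝ ≤ 0 := by
    rw [inner_sub_left, hyx']
    linarith [hM.inner_le hw x']
  have hdist : ‖x - x'‖ < η / (2 * B + 1) := by rwa [← dist_eq_norm, dist_comm]
  have hnorm : ‖w - y‖ ≤ 2 * B := (norm_sub_le w y).trans (by linarith [hB w hw, hB y hy])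
  have hclose : ⟪w - y, x - x'⟫_ℝ < η :=
    calc ⟪w - y, x - x'⟫_ℝ ≤ ‖w - y‖ * ‖x - x'‖ := real_inner_le_norm _ _
      _ ≤ (2 * B + 1) * ‖x - x'‖ := by gcongr; linarith
      _ < (2 * B + 1) * (η / (2 * B + 1)) := by gcongr
      _ = η := mul_div_cancel₀ η (by positivity)
  rw [inner_sub_right, inner_sub_left, hwx] at hclose
  linarith

/-- Danskin's theorem for support functions. -/
lemma hasGradientAt [CompleteSpace E] (hM : IsSupportFunction C M) (hC : IsCompact C)
    {w x : E} (hw : w ∈ C) (hwx : ⟪w, x⟫_ℝ = M x) (huniq : ∀ y ∈ C, ⟪y, x⟫_ℝ = M x → y = w) :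
    HasGradientAt M w x := by
  rw [hasGradientAt_iff_isLittleO, Asymptotics.isLittleO_iff]
  intro c hc
  filter_upwards [hM.eventually_norm_sub_le hC hw hwx huniq hc] with x' hx'
  obtain ⟨y, hy, hyx'⟩ := hM.exists_inner_eq x'
  have hlow : ⟪w, x' - x⟫_ℝ ≤ M x' - M x := by
    rw [inner_sub_right, hwx]
    linarith [hM.inner_le hw x']
  have hup : M x' - M x ≤ ⟪y, x' - x⟫_ℝ := by
    rw [inner_sub_right, hyx']
    linarith [hM.inner_le hy x]
  have hyw : ⟪y - w, x' - x⟫_ℝ ≤ c * ‖x' - x‖ :=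
    (real_inner_le_norm _ _).trans (mul_le_mul_of_nonneg_right (hx' y hy hyx') (norm_nonneg _))
  rw [inner_sub_left] at hyw
  rw [Real.norm_eq_abs, abs_le]
  constructor <;> nlinarith [norm_nonneg (x' - x)]

end IsSupportFunction

end Gauge

section Polar

variable {n : ℕ} {K : Set (Euc n)}

lemma isClosed_polarSet : IsClosed (polarSet K) := by
  simp only [polarSet, ofPred_forall]
  exact isClosed_biInter fun y _ =>
    isClosed_le (continuous_id.inner continuous_const) continuous_const

lemma convex_polarSet : Convex ℝ (polarSet K) := by
  simp only [polarSet, ofPred_forall]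
  exact convex_iInter₂ fun y _ => convex_halfSpace_le
    ⟨fun a b => inner_add_left a b y, fun c a => real_inner_smul_left a y c⟩ 1

lemma polarSet_anti {L : Set (Euc n)} (h : K ⊆ L) : polarSet L ⊆ polarSet K :=
  fun _ hd y hy => hd y (h hy)

lemma polarSet_closedBall {r : ℝ} (hr : 0 < r) :
    polarSet (closedBall (0 : Euc n) r) = closedBall 0 r⁻¹ := by
  ext d
  simp only [polarSet, mem_ofPred_eq, mem_closedBall, dist_zero_right]
  constructor
  · intro h
    rcases eq_or_ne d 0 with rfl | hd
    · simp [hr.le]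
    have hnd : 0 < ‖d‖ := norm_pos_iff.2 hd
    have h1 := h ((r / ‖d‖) • d) (by rw [norm_smul, Real.norm_of_nonneg (by positivity),
      div_mul_cancel₀ r hnd.ne'])
    rw [real_inner_smul_right, real_inner_self_eq_norm_sq] at h1
    rw [le_inv_comm₀ hnd hr, ← one_div, le_div_iff₀ hnd]
    calc r * ‖d‖ = r / ‖d‖ * ‖d‖ ^ 2 := by field_simp
      _ ≤ 1 := h1
  · intro hd y hy
    calc ⟪d, y⟫_ℝ ≤ ‖d‖ * ‖y‖ := real_inner_le_norm d y
      _ ≤ r⁻¹ * r := mul_le_mul hd hy (norm_nonneg y) (by positivity)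
      _ = 1 := inv_mul_cancel₀ hr.ne'

lemma polarSet_mem_nhds_zero (hK : Bornology.IsBounded K) : polarSet K ∈ 𝓝 (0 : Euc n) := by
  obtain ⟨R, hR, hKR⟩ := hK.subset_closedBall_lt 0 0
  refine mem_of_superset (closedBall_mem_nhds 0 (inv_pos.2 hR)) ?_
  rw [← polarSet_closedBall hR]
  exact polarSet_anti hKR

lemma isCompact_polarSet (h0 : K ∈ 𝓝 (0 : Euc n)) : IsCompact (polarSet K) := by
  obtain ⟨ε, hε, hεK⟩ := nhds_basis_closedBall.mem_iff.1 h0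
  refine isCompact_of_isClosed_isBounded isClosed_polarSet
    (isBounded_closedBall.subset (?_ : polarSet K ⊆ closedBall 0 ε⁻¹))
  rw [← polarSet_closedBall hε]
  exact polarSet_anti hεK

lemma isSupportFunction_gauge_polarSet (hK : IsCompact K) (h0 : (0 : Euc n) ∈ K) :
    IsSupportFunction K (gauge (polarSet K)) := by
  intro d
  have hinner_le : ∀ y ∈ K, ⟪y, d⟫_ℝ ≤ gauge (polarSet K) d := by
    intro y hy
    refine le_of_forall_gt_imp_ge_of_dense fun μ hμ => ?_
    obtain ⟨b, hb, hbμ, e, he, rfl⟩ :=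
      exists_lt_of_gauge_lt (absorbent_nhds_zero (polarSet_mem_nhds_zero hK.isBounded)) hμ
    rw [real_inner_smul_right, real_inner_comm]
    nlinarith [he y hy]
  refine ⟨hinner_le, ?_⟩
  obtain ⟨y₀, hy₀, hmax⟩ :=
    hK.exists_isMaxOn (f := fun y => ⟪y, d⟫_ℝ) ⟨0, h0⟩ (by fun_prop)
  refine ⟨y₀, hy₀, le_antisymm (hinner_le y₀ hy₀)
    (le_of_forall_gt_imp_ge_of_dense fun μ hμ => gauge_le_of_mem ?_ ?_)⟩
  · have : ⟪(0 : Euc n), d⟫_ℝ ≤ ⟪y₀, d⟫_ℝ := hmax h0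
    rw [inner_zero_left] at this
    linarith
  · have hμ0 : 0 < μ := (inner_zero_left (𝕜 := ℝ) d ▸ hmax h0 : _ ≤ _).trans_lt hμ
    refine ⟨μ⁻¹ • d, fun y hy => ?_, smul_inv_smul₀ hμ0.ne' d⟩
    rw [real_inner_smul_left, real_inner_comm, inv_mul_le_one₀ hμ0]
    exact (hmax hy).trans hμ.le

lemma inner_le_gauge_mul_gauge_polarSet (hK : IsCompact K) (hc : Convex ℝ K)
    (h0 : K ∈ 𝓝 (0 : Euc n)) (z d : Euc n) :
    ⟪z, d⟫_ℝ ≤ gauge K z * gauge (polarSet K) d := by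
  rcases eq_or_ne z 0 with rfl | hz
  · simp
  have hτ := gauge_pos_of_ne_zero hK.isBounded h0 hz
  have h := (isSupportFunction_gauge_polarSet hK (mem_of_mem_nhds h0)).inner_le
    (inv_gauge_smul_mem hK.isClosed hc h0 z) d
  rwa [real_inner_smul_left, inv_mul_le_iff₀ hτ] at h

lemma gauge_polarSet_eq_one (hK : IsCompact K) (h0 : (0 : Euc n) ∈ K) {d z : Euc n}
    (hd : d ∈ polarSet K) (hz : z ∈ K) (hdz : ⟪d, z⟫_ℝ = 1) : gauge (polarSet K) d = 1 :=
  le_antisymm (gauge_le_one_of_mem hd) <| by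
    rw [← hdz, real_inner_comm]
    exact (isSupportFunction_gauge_polarSet hK h0).inner_le hz d

lemma mem_normalCone_inter_frontier_polarSet_iff (hK : IsCompact K) (h0 : (0 : Euc n) ∈ K)
    {z d : Euc n} (hz : z ∈ K) :
    d ∈ normalCone K z ∩ frontier (polarSet K) ↔ d ∈ polarSet K ∧ ⟪d, z⟫_ℝ = 1 := by
  have hsupp := isSupportFunction_gauge_polarSet hK h0
  rw [mem_inter_iff,
    ← gauge_eq_one_iff_mem_frontier convex_polarSet (polarSet_mem_nhds_zero hK.isBounded)]
  simp only [normalCone, mem_ofPred_eq, inner_sub_right, sub_nonneg]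
  constructor
  · rintro ⟨hnormal, hd⟩
    obtain ⟨y₀, hy₀, hy₀d⟩ := hsupp.exists_inner_eq d
    have hdz : ⟪d, z⟫_ℝ = 1 :=
      le_antisymm (by rw [← hd, real_inner_comm]; exact hsupp.inner_le hz d)
        (by rw [← hd, ← hy₀d, real_inner_comm]; exact hnormal y₀ hy₀)
    exact ⟨fun y hy => hdz ▸ hnormal y hy, hdz⟩
  · rintro ⟨hd, hdz⟩
    exact ⟨fun y hy => hdz ▸ hd y hy, gauge_polarSet_eq_one hK h0 hd hz hdz⟩

lemma SmoothSet.existsUnique_inner_eq_one (hs : SmoothSet K) (hK : IsCompact K)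
    (hc : Convex ℝ K) (h0 : K ∈ 𝓝 (0 : Euc n)) {z : Euc n} (hz : gauge K z = 1) :
    ∃! d, d ∈ polarSet K ∧ ⟪d, z⟫_ℝ = 1 := by
  have hzfr := (gauge_eq_one_iff_mem_frontier hc h0).1 hz
  have hzK : z ∈ K := hK.isClosed.frontier_subset hzfr
  simpa only [mem_normalCone_inter_frontier_polarSet_iff hK (mem_of_mem_nhds h0) hzK]
    using hs z hzfr

end Polar

section Barrier

variable {n : ℕ} {K : Set (Euc n)}

lemma isSupportFunction_gauge (hs : SmoothSet K) (hK : IsCompact K) (hc : Convex ℝ K)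
    (h0 : K ∈ 𝓝 (0 : Euc n)) : IsSupportFunction (polarSet K) (gauge K) := by
  intro z
  refine ⟨fun w hw => ?_, ?_⟩
  · rw [real_inner_comm]
    exact (inner_le_gauge_mul_gauge_polarSet hK hc h0 z w).trans
      (mul_le_of_le_one_right (gauge_nonneg z) (gauge_le_one_of_mem hw))
  rcases eq_or_ne z 0 with rfl | hz
  · exact ⟨0, fun y _ => by simp, by simp⟩
  have hτ := gauge_pos_of_ne_zero hK.isBounded h0 hz
  obtain ⟨d, ⟨hd, hdz⟩, -⟩ := hs.existsUnique_inner_eq_one hK hc h0 (gauge_inv_gauge_smul hτ.ne')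
  refine ⟨d, hd, ?_⟩
  rwa [real_inner_smul_right, inv_mul_eq_one₀ hτ.ne', eq_comm] at hdz

lemma SmoothSet.hasGradientAt_gauge (hs : SmoothSet K) (hK : IsCompact K) (hc : Convex ℝ K)
    (h0 : K ∈ 𝓝 (0 : Euc n)) {x : Euc n} (hx : x ≠ 0) :
    ∃ d, HasGradientAt (gauge K) d x ∧ gauge (polarSet K) d = 1 := by
  have hτ := gauge_pos_of_ne_zero hK.isBounded h0 hx
  obtain ⟨d, ⟨hd, hdx⟩, huniq⟩ :=
    hs.existsUnique_inner_eq_one hK hc h0 (gauge_inv_gauge_smul hτ.ne')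
  have hscale : ∀ w : Euc n, ⟪w, (gauge K x)⁻¹ • x⟫_ℝ = 1 ↔ ⟪w, x⟫_ℝ = gauge K x := fun w => by
    rw [real_inner_smul_right, inv_mul_eq_one₀ hτ.ne', eq_comm]
  refine ⟨d, (isSupportFunction_gauge hs hK hc h0).hasGradientAt (isCompact_polarSet h0) hd
    ((hscale d).1 hdx) fun w hw hwx => huniq w ⟨hw, (hscale w).2 hwx⟩, ?_⟩
  exact gauge_polarSet_eq_one hK (mem_of_mem_nhds h0) hd
    (inv_gauge_smul_mem hK.isClosed hc h0 x) hdx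

lemma StrictlyConvexSet.hasGradientAt_gauge_polarSet (hs : StrictlyConvexSet K)
    (hK : IsCompact K) (hc : Convex ℝ K) (h0 : K ∈ 𝓝 (0 : Euc n)) {v : Euc n} (hv : v ≠ 0) :
    ∃ W, HasGradientAt (gauge (polarSet K)) W v := by
  have hsupp := isSupportFunction_gauge_polarSet hK (mem_of_mem_nhds h0)
  have hσ := gauge_pos_of_ne_zero (isCompact_polarSet h0).isBounded
    (polarSet_mem_nhds_zero hK.isBounded) hv
  -- Maximizers of `⟪·, v⟫` on `K` have gauge `1`; a midpoint of two of them would too, which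
  -- strict convexity forbids.
  have hmax : ∀ y, ⟪y, v⟫_ℝ = gauge (polarSet K) v → 1 ≤ gauge K y := fun y hy => by
    have := inner_le_gauge_mul_gauge_polarSet hK hc h0 y v
    rw [hy] at this
    exact (le_mul_iff_one_le_left hσ).1 this
  have hfront : ∀ y ∈ K, ⟪y, v⟫_ℝ = gauge (polarSet K) v → y ∈ frontier K := fun y hy hyv =>
    (gauge_eq_one_iff_mem_frontier hc h0).1 (le_antisymm (gauge_le_one_of_mem hy) (hmax y hyv))
  obtain ⟨W, hW, hWv⟩ := hsupp.exists_inner_eq v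
  refine ⟨W, hsupp.hasGradientAt hK hW hWv fun y hy hyv => ?_⟩
  by_contra hne
  have hmid := interior_subset_gauge_lt_one K (hs y (hfront y hy hyv) W (hfront W hW hWv) hne)
  refine (hmax _ ?_).not_gt hmid
  rw [midpoint_eq_smul_add, real_inner_smul_left, inner_add_left, hyv, hWv, invOf_eq_inv]
  ring

lemma FstarK_eq_conjBarrier (hK : IsCompact K) (hc : Convex ℝ K) (h0 : K ∈ 𝓝 (0 : Euc n))
    (d : Euc n) : FstarK K d = conjBarrier (gauge (polarSet K) d) := by
  set σ := gauge (polarSet K) d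
  have hσ : 0 ≤ σ := gauge_nonneg d
  have hub : conjBarrier σ ∈ upperBounds ((fun x => ⟪x, d⟫_ℝ - FK K x) '' {x | gauge K x < 1}) := by
    rintro _ ⟨x, hx, rfl⟩
    exact (sub_le_sub_right (inner_le_gauge_mul_gauge_polarSet hK hc h0 x d) _).trans
      (mul_sub_barrier_le_conjBarrier hx (by linarith))
  -- The supremum is attained at `a • y`, with `y ∈ K` maximizing `⟪·, d⟫` and `a = σ / (1 + σ)`.
  obtain ⟨y, hy, hyd⟩ :=
    (isSupportFunction_gauge_polarSet hK (mem_of_mem_nhds h0)).exists_inner_eq d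
  set a := σ / (1 + σ)
  have ha0 : 0 ≤ a := by positivity
  have ha1 : a < 1 := (div_lt_one (by linarith)).2 (by linarith)
  have hay : gauge K (a • y) ≤ a := by
    rw [gauge_smul_of_nonneg ha0, smul_eq_mul]
    exact mul_le_of_le_one_right ha0 (gauge_le_one_of_mem hy)
  have hval : conjBarrier σ ≤ ⟪a • y, d⟫_ℝ - FK K (a • y) := by
    rw [real_inner_smul_left, hyd, ← mul_sub_barrier_eq_conjBarrier (by linarith)]
    exact sub_le_sub_left (barrier_le_barrier (gauge_nonneg _) hay ha1) _
  exact le_antisymm (csSup_le ⟨_, 0, by simp, rfl⟩ hub)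
    (le_csSup_of_le ⟨_, hub⟩ ⟨a • y, hay.trans_lt ha1, rfl⟩ hval)

lemma SmoothSet.gauge_polarSet_gradient_FK (hs : SmoothSet K) (hK : IsCompact K)
    (hc : Convex ℝ K) (h0 : K ∈ 𝓝 (0 : Euc n)) {x : Euc n} (hx : gauge K x < 1) :
    gauge (polarSet K) (gradient (FK K) x) = gauge K x / (1 - gauge K x) := by
  rcases eq_or_ne x 0 with rfl | hx0
  · have hgrad : HasGradientAt (FK K) 0 0 := by
      refine HasDerivAt.comp_hasGradientAt_zero (f := barrier) ?_ gauge_zero (gauge_isBigO_id h0)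
      simpa using hasDerivAt_barrier (a := 0) one_pos
    simp [hgrad.gradient]
  obtain ⟨d, hd, hd1⟩ := hs.hasGradientAt_gauge hK hc h0 hx0
  have hgrad : HasGradientAt (FK K) ((gauge K x / (1 - gauge K x)) • d) x :=
    (hasDerivAt_barrier hx).comp_hasGradientAt hd
  rw [hgrad.gradient, gauge_smul_of_nonneg (div_nonneg (gauge_nonneg x) (by linarith)),
    smul_eq_mul, hd1, mul_one]

/-- `gauge (polarSet K)` has no gradient at `0`, but its compositions with functions that are flat
at `0` do. -/
lemma StrictlyConvexSet.exists_hasGradientAt_comp_gauge_polarSet (hs : StrictlyConvexSet K)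
    (hK : IsCompact K) (hc : Convex ℝ K) (h0 : K ∈ 𝓝 (0 : Euc n)) (v : Euc n) :
    ∃ W, ∀ (f : ℝ → ℝ) (f' : ℝ), HasDerivAt f f' (gauge (polarSet K) v) → (v = 0 → f' = 0) →
      HasGradientAt (fun d => f (gauge (polarSet K) d)) (f' • W) v := by
  rcases eq_or_ne v 0 with rfl | hv
  · refine ⟨0, fun f f' hf hf' => ?_⟩
    rw [gauge_zero, hf' rfl] at hf
    rw [smul_zero]
    exact hf.comp_hasGradientAt_zero gauge_zero
      (gauge_isBigO_id (polarSet_mem_nhds_zero hK.isBounded))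
  obtain ⟨W, hW⟩ := hs.hasGradientAt_gauge_polarSet hK hc h0 hv
  exact ⟨W, fun f f' hf _ => hf.comp_hasGradientAt hW⟩

lemma breg_conjBarrier_comp_le {N : Euc n → ℝ} {u v W : Euc n} (hu : 0 ≤ N u) (hv : 0 ≤ N v)
    (hF : HasGradientAt (fun d => conjBarrier (N d)) ((N v / (1 + N v)) • W) v)
    (hφ : HasGradientAt (fun d => N d ^ 2 / 2) (N v • W) v) :
    breg (fun d => conjBarrier (N d)) u v ≤ (1 + N v)⁻¹ * breg (fun d => N d ^ 2 / 2) u v := by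
  have hkey := conjBarrier_sub_conjBarrier_le hu hv
  have h1v : 1 + N v ≠ 0 := by linarith
  have hsplit : (1 + N v)⁻¹ * breg (fun d => N d ^ 2 / 2) u v
      = (N u ^ 2 - N v ^ 2) / (2 * (1 + N v)) - N v / (1 + N v) * ⟪W, u - v⟫_ℝ := by
    rw [breg, hφ.gradient, real_inner_smul_left]
    field_simp
  rw [hsplit, breg, hF.gradient, real_inner_smul_left]
  linarith

end Barrier

theorem bregman_conjugate_upper_bound_general {n : ℕ}
    (K : Set (Euc n)) (hKcomp : IsCompact K) (hKconv : Convex ℝ K)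
    (h0 : (0 : Euc n) ∈ interior K)
    (hstrict : StrictlyConvexSet K) (hsmooth : SmoothSet K)
    (x : Euc n) (hx1 : gauge K x < 1)
    (u : Euc n)
    (v : Euc n) (hv : v = gradient (FK K) x) :
    breg (FstarK K) u v
      ≤ (1 - gauge K x) ^ 2 * gauge (polarSet K) (u - v) ^ 2
        + (1 - gauge K x) * breg (fun d => gauge (polarSet K) d ^ 2 / 2) u v := by
  have hK0 : K ∈ 𝓝 (0 : Euc n) := mem_interior_iff_mem_nhds.1 h0
  obtain ⟨W, hW⟩ := hstrict.exists_hasGradientAt_comp_gauge_polarSet hKcomp hKconv hK0 v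
  set N := gauge (polarSet K)
  have hs : N v = gauge K x / (1 - gauge K x) :=
    hv ▸ hsmooth.gauge_polarSet_gradient_FK hKcomp hKconv hK0 hx1
  have hNv : 0 ≤ N v := gauge_nonneg v
  have h1t : 1 - gauge K x = (1 + N v)⁻¹ := by
    have : 1 - gauge K x ≠ 0 := by linarith
    rw [hs]
    field_simp
    ring
  have hN0 : v = 0 → N v = 0 := fun h => h ▸ gauge_zero
  have hbreg := breg_conjBarrier_comp_le (gauge_nonneg u) hNv
    (hW _ _ (hasDerivAt_conjBarrier (by linarith)) fun h => by simp [h])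
    (hW _ _ ((((hasDerivAt_id' _).fun_pow 2).div_const 2).congr_deriv (by ring)) hN0)
  rw [funext (FstarK_eq_conjBarrier hKcomp hKconv hK0), h1t]
  exact hbreg.trans (le_add_of_nonneg_left (by positivity))

/-- If `Θ = (‖u‖_{K°} - ‖v‖_{K°}) / (1 + ‖v‖_{K°}) ≥ -1/2` where
`v = ∇F_K(x)`, then the Bregman divergence of the conjugate barrier is bounded by
`(1 - ‖x‖_K)²‖u - v‖²_{K°} + (1 - ‖x‖_K) D_{½‖·‖²_{K°}}(u, v)`. -/
theorem bregman_conjugate_upper_bound {n : ℕ}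
    (K : Set (Euc n)) (hKcomp : IsCompact K) (hKconv : Convex ℝ K)
    (h0 : (0 : Euc n) ∈ interior K)
    (hstrict : StrictlyConvexSet K) (hsmooth : SmoothSet K)
    (x : Euc n) (hxK : x ∈ K) (hx1 : gauge K x < 1)
    (u : Euc n) (hune : u ≠ 0)
    (v : Euc n) (hv : v = gradient (FK K) x)
    (hΘ : (gauge (polarSet K) u - gauge (polarSet K) v) / (1 + gauge (polarSet K) v)
            ≥ -(1 / 2 : ℝ)) :
    breg (FstarK K) u v
      ≤ (1 - gauge K x) ^ 2 * gauge (polarSet K) (u - v) ^ 2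
        + (1 - gauge K x) * breg (fun d => gauge (polarSet K) d ^ 2 / 2) u v :=
  bregman_conjugate_upper_bound_general K hKcomp hKconv h0 hstrict hsmooth x hx1 u v hv
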